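/- Let α > 0 and f > 0. If (a_n)_{n≥0} is a sequence of strictly positive real numbers with a_0 = f, Σ_{n≥1} a_n² < ∞, and c_{n−1} a_{n−1}² = c_n a_n a_{n+1} for all n ≥ 1, then a_n = f·2^{−αn/3} for every n ≥ 0. In other words, the forced inviscid DN model has a unique positive constant (stationary) solution of finite energy. -/

import Mathlib

/-!
Write `a n = f * 2 ^ (-α n / 3) * exp (v n)`. Taking logarithms turns the DN relation into the
linear recurrence `v (n + 2) = 2 v n - v (n + 1)`, whose characteristic roots are `1` and `-2`,
so `v n = p + q (-2) ^ n`. Finite energy bounds `log (a n)` from above, hence `v n` grows at most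
linearly from above; since `q (-2) ^ n` is large and positive for every other `n` unless `q = 0`,
`v` is constant, and `v 0 = 0`.
-/

open Filter Real Topology

namespace Stmt3

lemma nonpos_of_mul_two_pow_le_linear {c A B : ℝ} (h : ∀ n : ℕ, c * 2 ^ n ≤ A + B * n) :
    c ≤ 0 := by
  have hgeom : Tendsto (fun n : ℕ => (1 / 2 : ℝ) ^ n) atTop (𝓝 0) :=
    tendsto_pow_atTop_nhds_zero_of_lt_one (by norm_num) (by norm_num)
  have hlin : Tendsto (fun n : ℕ => (n : ℝ) ^ 1 / 2 ^ n) atTop (𝓝 0) :=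
    tendsto_pow_const_div_const_pow_of_one_lt 1 (by norm_num)
  have hlim :
      Tendsto (fun n : ℕ => A * (1 / 2) ^ n + B * ((n : ℝ) ^ 1 / 2 ^ n)) atTop (𝓝 0) := by
    simpa using (hgeom.const_mul A).add (hlin.const_mul B)
  refine ge_of_tendsto' hlim fun n => ?_
  have hrw : A * (1 / 2) ^ n + B * ((n : ℝ) ^ 1 / 2 ^ n) = (A + B * n) / 2 ^ n := by
    rw [div_pow, one_pow]
    field_simp
  rw [hrw, le_div_iff₀ (by positivity)]
  exact h n

lemma abs_mul_two_pow_le_max {d : ℕ → ℝ} (hd : ∀ n, d (n + 1) = -2 * d n) (n : ℕ) :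
    |d 0| * 2 ^ n ≤ max (d n) (d (n + 1)) := by
  have hpow : d n = (-2) ^ n * d 0 := by
    induction n with
    | zero => simp
    | succ n ih => rw [hd, ih]; ring
  have habs : |d n| = |d 0| * 2 ^ n := by
    rw [hpow, abs_mul, abs_pow, abs_neg, abs_two, mul_comm]
  rw [← habs, hd]
  rcases le_total 0 (d n) with h | h
  · exact (abs_of_nonneg h).trans_le (le_max_left _ _)
  · exact le_max_of_le_right (by linarith [abs_of_nonpos h])

lemma eq_zero_of_neg_two_mul_of_le_linear {d : ℕ → ℝ} {A B : ℝ}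
    (hd : ∀ n, d (n + 1) = -2 * d n) (hle : ∀ n : ℕ, d n ≤ A + B * n) (n : ℕ) :
    d n = 0 := by
  have hd0 : d 0 = 0 := by
    refine abs_nonpos_iff.mp
      (nonpos_of_mul_two_pow_le_linear (A := A + |B|) (B := B) fun n => ?_)
    refine (abs_mul_two_pow_le_max hd n).trans (max_le ?_ ?_)
    · linarith [hle n, abs_nonneg B]
    · have := hle (n + 1)
      push_cast at this
      linarith [le_abs_self B]
  induction n with
  | zero => exact hd0
  | succ n ih => rw [hd, ih, mul_zero]

lemma eq_const_of_recurrence_of_le_linear {u : ℕ → ℝ} {A B : ℝ}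
    (hu : ∀ n, u (n + 2) = 2 * u n - u (n + 1)) (hle : ∀ n : ℕ, u n ≤ A + B * n)
    (n : ℕ) : u n = u 0 := by
  set c := (u 1 + 2 * u 0) / 3
  have hinv : ∀ n, u (n + 1) + 2 * u n = 3 * c := by
    intro n
    induction n with
    | zero => ring
    | succ n ih => rw [hu]; linarith
  have hdev := eq_zero_of_neg_two_mul_of_le_linear (d := fun n => u n - c) (A := A - c) (B := B)
    (fun n => by linarith [hinv n]) (fun n => by linarith [hle n])
  linarith [hdev n, hdev 0]

lemma log_le_sq (x : ℝ) : log x ≤ x ^ 2 := by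
  rcases eq_or_ne x 0 with rfl | hx
  · simp
  have h := log_le_sub_one_of_pos (abs_pos.mpr hx)
  rw [log_abs] at h
  nlinarith [sq_abs x]

section DN

variable {α : ℝ} {a : ℕ → ℝ}

/-- `log (a n / 2 ^ (-α n / 3))`. -/
noncomputable def normalizedLog (α : ℝ) (a : ℕ → ℝ) (n : ℕ) : ℝ :=
  log (a n) + α * log 2 / 3 * n

lemma normalizedLog_recurrence (hpos : ∀ n, 0 < a n)
    (hrec : ∀ n : ℕ, 1 ≤ n →
      (2 : ℝ) ^ (α * ((n : ℝ) - 1)) * (a (n - 1)) ^ 2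
        = (2 : ℝ) ^ (α * (n : ℝ)) * a n * a (n + 1))
    (n : ℕ) :
    normalizedLog α a (n + 2) = 2 * normalizedLog α a n - normalizedLog α a (n + 1) := by
  have h := congrArg log (hrec (n + 1) n.succ_pos)
  have hpow_ne : ∀ x : ℝ, (2 : ℝ) ^ x ≠ 0 := fun x => (rpow_pos_of_pos two_pos x).ne'
  rw [Nat.add_sub_cancel, log_mul (hpow_ne _) (pow_ne_zero 2 (hpos n).ne'),
    log_mul (mul_ne_zero (hpow_ne _) (hpos _).ne') (hpos _).ne', log_mul (hpow_ne _) (hpos _).ne',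
    log_rpow two_pos, log_rpow two_pos, log_pow] at h
  simp only [normalizedLog]
  push_cast at h ⊢
  linarith

end DN

theorem constant_solution_unique (α f : ℝ)
    (a : ℕ → ℝ) (hpos : ∀ n, 0 < a n) (h0 : a 0 = f)
    (hsum : Summable fun n => (a (n + 1)) ^ 2)
    (hrec : ∀ n : ℕ, 1 ≤ n →
      (2 : ℝ) ^ (α * ((n : ℝ) - 1)) * (a (n - 1)) ^ 2
        = (2 : ℝ) ^ (α * (n : ℝ)) * a n * a (n + 1)) :
    ∀ n : ℕ, a n = f * (2 : ℝ) ^ (-(α * (n : ℝ)) / 3) := by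
  have hsq : Summable fun n => a n ^ 2 := (summable_nat_add_iff 1).mp hsum
  have hbound (n : ℕ) : normalizedLog α a n ≤ (∑' k, a k ^ 2) + α * log 2 / 3 * n :=
    add_le_add_left ((log_le_sq _).trans (hsq.le_tsum n fun k _ => sq_nonneg _)) _
  intro n
  have hconst := eq_const_of_recurrence_of_le_linear (normalizedLog_recurrence hpos hrec) hbound n
  simp only [normalizedLog, h0, Nat.cast_zero, mul_zero, add_zero] at hconst
  calc a n = exp (log (a n)) := (exp_log (hpos n)).symm
    _ = exp (log f + log 2 * (-(α * n) / 3)) := by rw [← hconst]; ring_nf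
    _ = f * 2 ^ (-(α * n) / 3) := by rw [exp_add, exp_log (h0 ▸ hpos 0), rpow_def_of_pos two_pos]

end Stmt3
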